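/- In the one-hidden-layer ReLU ANN setting with constant target α, for a gradient descent sequence Θ_{n+1} = Θ_n − γ G(Θ_n) with γ ∈ (0, (4V(Θ_0)+2)^{-1}], it holds that sup_{n∈ℕ_0} ‖Θ_n‖ ≤ (V(Θ_0))^{1/2} < ∞, that Σ_{n=0}^∞ L_∞(Θ_n) ≤ V(Θ_0)/(4γ) < ∞, and consequently limsup_{n→∞} L_∞(Θ_n) = 0. -/

import Mathlib

/-!
`V` is a Lyapunov function for gradient descent. By positive homogeneity of the ReLU,
`w_j G_{w_j} + b_j G_{b_j} = v_j G_{v_j}`, which yields `⟪φ, G φ⟫ + (c - 2α) G_c φ = 4 L(φ)`;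
hence one step changes `V` by exactly `-8γ L + γ² (‖G‖² + G_c²)`. Cauchy–Schwarz on `[0, 1]`
bounds every component of `G` by the risk, `‖G‖² + G_c² ≤ 8 (‖φ‖² + 1) L`, so while
`‖Θ_n‖² ≤ V(Θ_n) ≤ V(Θ_0)` the step size `γ ≤ (4 V(Θ_0) + 2)⁻¹` makes the quadratic term at most
`4γ L`. By induction `V(Θ_{n+1}) ≤ V(Θ_n) - 4γ L(Θ_n)` for all `n`, which bounds `‖Θ_n‖` and
telescopes to `∑ L(Θ_n) ≤ V(Θ_0) / (4γ)`.
-/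

open MeasureTheory

noncomputable section

/-- weight parameters -/
def wp (H : ℕ) (φ : EuclideanSpace ℝ (Fin (3*H+1))) (j : Fin H) : ℝ := φ ⟨j.1, by omega⟩
/-- bias parameters -/
def bp (H : ℕ) (φ : EuclideanSpace ℝ (Fin (3*H+1))) (j : Fin H) : ℝ := φ ⟨H + j.1, by omega⟩
/-- outer weight parameters -/
def vp (H : ℕ) (φ : EuclideanSpace ℝ (Fin (3*H+1))) (j : Fin H) : ℝ := φ ⟨2*H + j.1, by omega⟩
/-- output bias -/
def cp (H : ℕ) (φ : EuclideanSpace ℝ (Fin (3*H+1))) : ℝ := φ ⟨3*H, by omega⟩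

/-- realization of the one-hidden-layer ReLU network -/
def realization (H : ℕ) (φ : EuclideanSpace ℝ (Fin (3*H+1))) (x : ℝ) : ℝ :=
  cp H φ + ∑ j : Fin H, vp H φ j * max (wp H φ j * x + bp H φ j) 0

/-- risk with constant target α -/
def risk (H : ℕ) (α : ℝ) (φ : EuclideanSpace ℝ (Fin (3*H+1))) : ℝ :=
  ∫ y in (0:ℝ)..1, (realization H φ y - α)^2

/-- activity interval I_j^φ -/
def actSet (H : ℕ) (φ : EuclideanSpace ℝ (Fin (3*H+1))) (j : Fin H) : Set ℝ :=
  {x | x ∈ Set.Icc (0:ℝ) 1 ∧ 0 < wp H φ j * x + bp H φ j}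

/-- generalized gradient G -/
def grad (H : ℕ) (α : ℝ) (φ : EuclideanSpace ℝ (Fin (3*H+1))) :
    EuclideanSpace ℝ (Fin (3*H+1)) := WithLp.toLp 2 fun (i : Fin (3*H+1)) =>
  if h : i.1 < H then
    2 * vp H φ ⟨i.1, h⟩ * ∫ x in actSet H φ ⟨i.1, h⟩, x * (realization H φ x - α)
  else if h2 : i.1 < 2*H then
    2 * vp H φ ⟨i.1 - H, by omega⟩ * ∫ x in actSet H φ ⟨i.1 - H, by omega⟩, (realization H φ x - α)
  else if h3 : i.1 < 3*H then
    2 * ∫ x in (0:ℝ)..1,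
      max (wp H φ ⟨i.1 - 2*H, by omega⟩ * x + bp H φ ⟨i.1 - 2*H, by omega⟩) 0 * (realization H φ x - α)
  else 2 * ∫ x in (0:ℝ)..1, (realization H φ x - α)

/-- Lyapunov function V -/
def lyap (H : ℕ) (α : ℝ) (φ : EuclideanSpace ℝ (Fin (3*H+1))) : ℝ :=
  ‖φ‖^2 + (cp H φ - 2*α)^2

open Finset Set

theorem sum_fin_three_mul_add_one {M : Type*} [AddCommMonoid M] (H : ℕ) (f : Fin (3*H+1) → M) :
    ∑ i, f i = ∑ j : Fin H, f ⟨j, by omega⟩ + ∑ j : Fin H, f ⟨H + j, by omega⟩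
      + ∑ j : Fin H, f ⟨2*H + j, by omega⟩ + f ⟨3*H, by omega⟩ := by
  have e : H + H + H + 1 = 3*H+1 := by ring
  rw [← (finCongr e).sum_comp, Fin.sum_univ_castSucc, Fin.sum_univ_add, Fin.sum_univ_add]
  congr 3
  · funext j
    congr 1
    ext
    simp only [finCongr_apply, Fin.val_cast, Fin.val_castSucc, Fin.val_natAdd]
    ring
  · ext
    simp only [finCongr_apply, Fin.val_cast, Fin.val_last]
    ring

theorem sq_integral_le_integral_sq {Ω : Type*} [MeasurableSpace Ω] {μ : Measure Ω}
    [IsFiniteMeasure μ] (hμ : μ.real univ ≤ 1) {f : Ω → ℝ} (hf : Integrable f μ)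
    (hf2 : Integrable (fun x => f x ^ 2) μ) :
    (∫ x, f x ∂μ) ^ 2 ≤ ∫ x, f x ^ 2 ∂μ := by
  set C := ∫ x, f x ∂μ
  have hvar : ∫ x, (f x - C) ^ 2 ∂μ = ∫ x, f x ^ 2 ∂μ - 2 * C * C + μ.real univ * C ^ 2 := by
    have hexp : ∀ x, (f x - C) ^ 2 = f x ^ 2 - 2 * C * f x + C ^ 2 := fun x => by ring
    have hlin : Integrable (fun x => f x ^ 2 - 2 * C * f x) μ := hf2.sub (hf.const_mul _)
    simp_rw [hexp]
    rw [integral_add hlin (integrable_const _), integral_sub hf2 (hf.const_mul _),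
      integral_const_mul, integral_const, smul_eq_mul]
  have hnonneg : 0 ≤ ∫ x, (f x - C) ^ 2 ∂μ := integral_nonneg fun x => sq_nonneg _
  nlinarith [sq_nonneg C]

theorem le_apply_zero_of_succ_le {V : ℕ → ℝ} (h : ∀ n, V n ≤ V 0 → V (n + 1) ≤ V n) :
    ∀ n, V n ≤ V 0
  | 0 => le_rfl
  | n + 1 => (h n (le_apply_zero_of_succ_le h n)).trans (le_apply_zero_of_succ_le h n)

theorem summable_and_tsum_le_of_descent {V L : ℕ → ℝ} {c : ℝ} (hc : 0 < c)
    (hV : ∀ n, 0 ≤ V n) (hL : ∀ n, 0 ≤ L n) (h : ∀ n, V (n + 1) + c * L n ≤ V n) :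
    Summable L ∧ ∑' n, L n ≤ V 0 / c := by
  have htelescope : ∀ n, c * ∑ k ∈ range n, L k + V n ≤ V 0 := by
    intro n
    induction n with
    | zero => simp
    | succ n ih => rw [sum_range_succ, mul_add]; linarith [h n]
  have hpartial : ∀ n, ∑ k ∈ range n, L k ≤ V 0 / c := fun n => by
    rw [le_div_iff₀' hc]
    linarith [htelescope n, hV n]
  exact ⟨summable_of_sum_range_le hL hpartial, Real.tsum_le_of_sum_range_le hL hpartial⟩

section Network

variable {H : ℕ} {α : ℝ} {φ : EuclideanSpace ℝ (Fin (3*H+1))}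

theorem inner_eq_sum_params (φ ψ : EuclideanSpace ℝ (Fin (3*H+1))) :
    inner ℝ φ ψ = ∑ j, wp H φ j * wp H ψ j + ∑ j, bp H φ j * bp H ψ j
      + ∑ j, vp H φ j * vp H ψ j + cp H φ * cp H ψ := by
  rw [PiLp.inner_apply]
  simp only [Real.inner_apply]
  exact sum_fin_three_mul_add_one H fun i => φ i * ψ i

theorem norm_sq_eq_sum_params (φ : EuclideanSpace ℝ (Fin (3*H+1))) :
    ‖φ‖ ^ 2 = ∑ j, wp H φ j ^ 2 + ∑ j, bp H φ j ^ 2 + ∑ j, vp H φ j ^ 2 + cp H φ ^ 2 := by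
  rw [← real_inner_self_eq_norm_sq, inner_eq_sum_params]
  simp only [sq]

theorem intervalIntegral_zero_one_eq_setIntegral (f : ℝ → ℝ) :
    ∫ x in (0:ℝ)..1, f x = ∫ x in Icc 0 1, f x := by
  rw [intervalIntegral.integral_of_le zero_le_one, integral_Icc_eq_integral_Ioc]

theorem wp_grad (j : Fin H) :
    wp H (grad H α φ) j = 2 * vp H φ j * ∫ x in actSet H φ j, x * (realization H φ x - α) := by
  simp only [wp, grad, PiLp.toLp_apply, dif_pos j.2, Fin.eta]

theorem bp_grad (j : Fin H) :
    bp H (grad H α φ) j = 2 * vp H φ j * ∫ x in actSet H φ j, (realization H φ x - α) := by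
  simp only [bp, grad, PiLp.toLp_apply, dif_neg (show ¬ H + j.1 < H by omega),
    dif_pos (show H + j.1 < 2*H by omega), Nat.add_sub_cancel_left, Fin.eta]

theorem vp_grad (j : Fin H) :
    vp H (grad H α φ) j =
      2 * ∫ x in Icc 0 1, max (wp H φ j * x + bp H φ j) 0 * (realization H φ x - α) := by
  simp only [vp, grad, PiLp.toLp_apply, dif_neg (show ¬ 2*H + j.1 < H by omega),
    dif_neg (show ¬ 2*H + j.1 < 2*H by omega), dif_pos (show 2*H + j.1 < 3*H by omega),
    Nat.add_sub_cancel_left, Fin.eta, intervalIntegral_zero_one_eq_setIntegral]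

theorem cp_grad : cp H (grad H α φ) = 2 * ∫ x in Icc 0 1, (realization H φ x - α) := by
  simp only [cp, grad, PiLp.toLp_apply, dif_neg (show ¬ 3*H < H by omega),
    dif_neg (show ¬ 3*H < 2*H by omega), dif_neg (lt_irrefl (3*H)),
    intervalIntegral_zero_one_eq_setIntegral]

theorem risk_eq_setIntegral : risk H α φ = ∫ x in Icc 0 1, (realization H φ x - α) ^ 2 :=
  intervalIntegral_zero_one_eq_setIntegral _

theorem risk_nonneg : 0 ≤ risk H α φ := by
  rw [risk_eq_setIntegral]
  exact setIntegral_nonneg measurableSet_Icc fun x _ => sq_nonneg _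

theorem continuous_realization : Continuous (realization H φ) := by
  unfold realization
  fun_prop

theorem actSet_subset_Icc (j : Fin H) : actSet H φ j ⊆ Icc 0 1 := fun _ hx => hx.1

theorem measurableSet_actSet (j : Fin H) : MeasurableSet (actSet H φ j) :=
  measurableSet_Icc.inter <| measurableSet_lt (f := fun _ => 0)
    (g := fun x => wp H φ j * x + bp H φ j) measurable_const (by fun_prop)

theorem setIntegral_actSet (j : Fin H) (g : ℝ → ℝ) :
    ∫ x in actSet H φ j, (wp H φ j * x + bp H φ j) * g x
      = ∫ x in Icc 0 1, max (wp H φ j * x + bp H φ j) 0 * g x := by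
  have hrelu : (fun x => max (wp H φ j * x + bp H φ j) 0 * g x) =
      {x | 0 < wp H φ j * x + bp H φ j}.indicator fun x => (wp H φ j * x + bp H φ j) * g x := by
    funext x
    by_cases hx : 0 < wp H φ j * x + bp H φ j
    · simp only [indicator_apply, mem_ofPred_eq, hx, if_true, max_eq_left hx.le]
    · simp only [indicator_apply, mem_ofPred_eq, hx, if_false, max_eq_right (not_lt.1 hx),
        zero_mul]
  rw [hrelu, setIntegral_indicator (measurableSet_lt (f := fun _ => 0)
    (g := fun x => wp H φ j * x + bp H φ j) measurable_const (by fun_prop))]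
  rfl

theorem wp_mul_wp_grad_add_bp_mul_bp_grad (j : Fin H) :
    wp H φ j * wp H (grad H α φ) j + bp H φ j * bp H (grad H α φ) j
      = vp H φ j * vp H (grad H α φ) j := by
  have hN : Continuous (realization H φ) := continuous_realization
  have hint {g : ℝ → ℝ} (hg : Continuous g) : IntegrableOn g (actSet H φ j) :=
    hg.integrableOn_Icc.mono_set (actSet_subset_Icc j)
  have hsplit : ∫ x in actSet H φ j, (wp H φ j * x + bp H φ j) * (realization H φ x - α)
      = wp H φ j * (∫ x in actSet H φ j, x * (realization H φ x - α))
        + bp H φ j * ∫ x in actSet H φ j, (realization H φ x - α) := by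
    simp_rw [add_mul, mul_assoc]
    rw [integral_add (hint (by fun_prop)) (hint (by fun_prop)), integral_const_mul,
      integral_const_mul]
  rw [wp_grad, bp_grad, vp_grad, ← setIntegral_actSet, hsplit]
  ring

theorem sum_vp_mul_vp_grad :
    ∑ j, vp H φ j * vp H (grad H α φ) j
      = 2 * ∫ x in Icc 0 1, (realization H φ x - cp H φ) * (realization H φ x - α) := by
  have hN : Continuous (realization H φ) := continuous_realization
  calc ∑ j, vp H φ j * vp H (grad H α φ) j
      = 2 * ∑ j, ∫ x in Icc 0 1,
          vp H φ j * max (wp H φ j * x + bp H φ j) 0 * (realization H φ x - α) := by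
        simp_rw [vp_grad, mul_sum, mul_assoc, integral_const_mul, mul_left_comm]
    _ = 2 * ∫ x in Icc 0 1,
          ∑ j, vp H φ j * max (wp H φ j * x + bp H φ j) 0 * (realization H φ x - α) := by
        rw [integral_finsetSum _ fun j _ => Continuous.integrableOn_Icc (by fun_prop)]
    _ = _ := by simp_rw [← sum_mul, realization, add_sub_cancel_left]

theorem inner_grad_add_eq_four_mul_risk :
    inner ℝ φ (grad H α φ) + (cp H φ - 2 * α) * cp H (grad H α φ) = 4 * risk H α φ := by
  have hN : Continuous (realization H φ) := continuous_realization
  have hwb : ∑ j, wp H φ j * wp H (grad H α φ) j + ∑ j, bp H φ j * bp H (grad H α φ) j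
      = ∑ j, vp H φ j * vp H (grad H α φ) j := by
    rw [← sum_add_distrib]
    exact sum_congr rfl fun j _ => wp_mul_wp_grad_add_bp_mul_bp_grad j
  have hrisk : (∫ x in Icc 0 1, (realization H φ x - cp H φ) * (realization H φ x - α))
      + (cp H φ - α) * ∫ x in Icc 0 1, (realization H φ x - α) = risk H α φ := by
    rw [← integral_const_mul, ← integral_add (Continuous.integrableOn_Icc (by fun_prop))
      (Continuous.integrableOn_Icc (by fun_prop)), risk_eq_setIntegral]
    congr 1 with x
    ring
  rw [inner_eq_sum_params, cp_grad]
  linear_combination hwb + 2 * sum_vp_mul_vp_grad (φ := φ) (α := α) + 4 * hrisk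

theorem sq_setIntegral_le_mul_risk {S : Set ℝ} (hS : MeasurableSet S) (hsub : S ⊆ Icc 0 1)
    {g : ℝ → ℝ} (hg : Continuous g) {C : ℝ} (hC : 0 ≤ C)
    (hbound : ∀ x ∈ S, g x ^ 2 ≤ C * (realization H φ x - α) ^ 2) :
    (∫ x in S, g x) ^ 2 ≤ C * risk H α φ := by
  have hN : Continuous (realization H φ) := continuous_realization
  have hSfin : volume S < ⊤ := (measure_mono hsub).trans_lt measure_Icc_lt_top
  have : IsFiniteMeasure (volume.restrict S) := isFiniteMeasure_restrict.2 hSfin.ne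
  have hvol : (volume.restrict S).real univ ≤ 1 := by
    rw [measureReal_restrict_apply_univ]
    calc volume.real S ≤ volume.real (Icc (0:ℝ) 1) :=
          measureReal_mono hsub measure_Icc_lt_top.ne
      _ = 1 := by simp
  have hint {f : ℝ → ℝ} (hf : Continuous f) (T : Set ℝ) (hT : T ⊆ Icc 0 1) : IntegrableOn f T :=
    hf.integrableOn_Icc.mono_set hT
  calc (∫ x in S, g x) ^ 2 ≤ ∫ x in S, g x ^ 2 :=
        sq_integral_le_integral_sq hvol (hint hg S hsub) (hint (by fun_prop) S hsub)
    _ ≤ ∫ x in S, C * (realization H φ x - α) ^ 2 :=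
        setIntegral_mono_on (hint (by fun_prop) S hsub) (hint (by fun_prop) S hsub) hS hbound
    _ ≤ ∫ x in Icc 0 1, C * (realization H φ x - α) ^ 2 :=
        setIntegral_mono_set (hint (by fun_prop) _ subset_rfl)
          (ae_of_all _ fun x => by positivity) hsub.eventuallyLE
    _ = C * risk H α φ := by rw [integral_const_mul, risk_eq_setIntegral]

theorem wp_grad_sq_le (j : Fin H) :
    wp H (grad H α φ) j ^ 2 ≤ 4 * vp H φ j ^ 2 * risk H α φ := by
  have hN : Continuous (realization H φ) := continuous_realization
  have hI := sq_setIntegral_le_mul_risk (φ := φ) (α := α)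
    (measurableSet_actSet (φ := φ) j) (actSet_subset_Icc j)
    (g := fun x => x * (realization H φ x - α)) (by fun_prop) zero_le_one fun x hx => by
      have hx2 : x ^ 2 ≤ 1 := pow_le_one₀ hx.1.1 hx.1.2
      nlinarith [sq_nonneg (realization H φ x - α)]
  calc wp H (grad H α φ) j ^ 2
      = 4 * vp H φ j ^ 2 * (∫ x in actSet H φ j, x * (realization H φ x - α)) ^ 2 := by
        rw [wp_grad]; ring
    _ ≤ 4 * vp H φ j ^ 2 * risk H α φ := by
        gcongr
        linarith

theorem bp_grad_sq_le (j : Fin H) :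
    bp H (grad H α φ) j ^ 2 ≤ 4 * vp H φ j ^ 2 * risk H α φ := by
  have hN : Continuous (realization H φ) := continuous_realization
  have hI := sq_setIntegral_le_mul_risk (φ := φ) (α := α)
    (measurableSet_actSet (φ := φ) j) (actSet_subset_Icc j)
    (g := fun x => realization H φ x - α) (by fun_prop) zero_le_one fun x _ => by simp
  calc bp H (grad H α φ) j ^ 2
      = 4 * vp H φ j ^ 2 * (∫ x in actSet H φ j, (realization H φ x - α)) ^ 2 := by
        rw [bp_grad]; ring
    _ ≤ 4 * vp H φ j ^ 2 * risk H α φ := by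
        gcongr
        linarith

theorem sq_max_zero_le (t : ℝ) : max t 0 ^ 2 ≤ t ^ 2 := by
  rw [← sq_abs t]
  exact pow_le_pow_left₀ (le_max_right _ _) (max_le (le_abs_self t) (abs_nonneg t)) 2

theorem vp_grad_sq_le (j : Fin H) :
    vp H (grad H α φ) j ^ 2 ≤ 8 * (wp H φ j ^ 2 + bp H φ j ^ 2) * risk H α φ := by
  have hN : Continuous (realization H φ) := continuous_realization
  have hI := sq_setIntegral_le_mul_risk (φ := φ) (α := α) measurableSet_Icc subset_rfl
    (g := fun x => max (wp H φ j * x + bp H φ j) 0 * (realization H φ x - α)) (by fun_prop)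
    (C := 2 * (wp H φ j ^ 2 + bp H φ j ^ 2)) (by positivity) fun x hx => by
      have hx2 : x ^ 2 ≤ 1 := pow_le_one₀ hx.1 hx.2
      have hrelu : max (wp H φ j * x + bp H φ j) 0 ^ 2 ≤ 2 * (wp H φ j ^ 2 + bp H φ j ^ 2) := by
        nlinarith [sq_max_zero_le (wp H φ j * x + bp H φ j), sq_nonneg (wp H φ j * x - bp H φ j),
          sq_nonneg (wp H φ j)]
      rw [mul_pow]
      exact mul_le_mul_of_nonneg_right hrelu (sq_nonneg _)
  calc vp H (grad H α φ) j ^ 2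
      = 4 * (∫ x in Icc 0 1, max (wp H φ j * x + bp H φ j) 0 * (realization H φ x - α)) ^ 2 := by
        rw [vp_grad]; ring
    _ ≤ 8 * (wp H φ j ^ 2 + bp H φ j ^ 2) * risk H α φ := by nlinarith

theorem cp_grad_sq_le : cp H (grad H α φ) ^ 2 ≤ 4 * risk H α φ := by
  have hN : Continuous (realization H φ) := continuous_realization
  have hI := sq_setIntegral_le_mul_risk (φ := φ) (α := α) measurableSet_Icc subset_rfl
    (g := fun x => realization H φ x - α) (by fun_prop) zero_le_one fun x _ => by simp
  rw [cp_grad]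
  nlinarith

theorem norm_grad_sq_add_cp_grad_sq_le :
    ‖grad H α φ‖ ^ 2 + cp H (grad H α φ) ^ 2 ≤ 8 * (‖φ‖ ^ 2 + 1) * risk H α φ := by
  have hL : 0 ≤ risk H α φ := risk_nonneg
  have hw : ∑ j, wp H (grad H α φ) j ^ 2 ≤ 4 * (∑ j, vp H φ j ^ 2) * risk H α φ := by
    rw [mul_sum, sum_mul]
    exact sum_le_sum fun j _ => wp_grad_sq_le j
  have hb : ∑ j, bp H (grad H α φ) j ^ 2 ≤ 4 * (∑ j, vp H φ j ^ 2) * risk H α φ := by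
    rw [mul_sum, sum_mul]
    exact sum_le_sum fun j _ => bp_grad_sq_le j
  have hv : ∑ j, vp H (grad H α φ) j ^ 2
      ≤ 8 * (∑ j, wp H φ j ^ 2 + ∑ j, bp H φ j ^ 2) * risk H α φ := by
    rw [← sum_add_distrib, mul_sum, sum_mul]
    exact sum_le_sum fun j _ => vp_grad_sq_le j
  rw [norm_sq_eq_sum_params (grad H α φ), norm_sq_eq_sum_params φ]
  nlinarith [cp_grad_sq_le (φ := φ) (α := α), mul_nonneg (sq_nonneg (cp H φ)) hL]

theorem lyap_sub_smul_grad (γ : ℝ) :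
    lyap H α (φ - γ • grad H α φ) = lyap H α φ - 8 * γ * risk H α φ
      + γ ^ 2 * (‖grad H α φ‖ ^ 2 + cp H (grad H α φ) ^ 2) := by
  have hcp : cp H (φ - γ • grad H α φ) = cp H φ - γ * cp H (grad H α φ) := rfl
  rw [lyap, lyap, hcp, norm_sub_sq_real, norm_smul, real_inner_smul_right, Real.norm_eq_abs,
    mul_pow, sq_abs]
  linear_combination (-2 * γ) * inner_grad_add_eq_four_mul_risk (φ := φ) (α := α)

theorem lyap_sub_smul_grad_le {γ : ℝ} (hγ : 0 ≤ γ) (hsmall : γ * (2 * ‖φ‖ ^ 2 + 2) ≤ 1) :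
    lyap H α (φ - γ • grad H α φ) ≤ lyap H α φ - 4 * γ * risk H α φ := by
  have hL : 0 ≤ risk H α φ := risk_nonneg
  have hsecond : γ ^ 2 * (‖grad H α φ‖ ^ 2 + cp H (grad H α φ) ^ 2) ≤ 4 * γ * risk H α φ :=
    calc γ ^ 2 * (‖grad H α φ‖ ^ 2 + cp H (grad H α φ) ^ 2)
        ≤ γ ^ 2 * (8 * (‖φ‖ ^ 2 + 1) * risk H α φ) := by
          gcongr
          exact norm_grad_sq_add_cp_grad_sq_le
      _ = 4 * γ * risk H α φ * (γ * (2 * ‖φ‖ ^ 2 + 2)) := by ring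
      _ ≤ 4 * γ * risk H α φ := mul_le_of_le_one_right (by positivity) hsmall
  rw [lyap_sub_smul_grad]
  linarith

theorem norm_sq_le_lyap : ‖φ‖ ^ 2 ≤ lyap H α φ :=
  le_add_of_nonneg_right (sq_nonneg _)

theorem lyap_nonneg : 0 ≤ lyap H α φ := by
  rw [lyap]
  positivity

end Network

theorem gd_convergence_general (H : ℕ) (α : ℝ)
    (γ : ℝ) (hγ : 0 < γ)
    (Θ : ℕ → EuclideanSpace ℝ (Fin (3*H+1)))
    (hrec : ∀ n : ℕ, Θ (n+1) = Θ n - γ • grad H α (Θ n))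
    (hγsmall : γ ≤ (4 * lyap H α (Θ 0) + 2)⁻¹) :
    (∀ n : ℕ, ‖Θ n‖ ≤ Real.sqrt (lyap H α (Θ 0))) ∧
    Summable (fun n => risk H α (Θ n)) ∧
    (∑' n : ℕ, risk H α (Θ n)) ≤ lyap H α (Θ 0) / (4 * γ) ∧
    Filter.Tendsto (fun n => risk H α (Θ n)) Filter.atTop (nhds 0) := by
  have hγ' : γ * (4 * lyap H α (Θ 0) + 2) ≤ 1 :=
    (le_div_iff₀ (by linarith [lyap_nonneg (α := α) (φ := Θ 0)])).1 (by rwa [one_div])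
  have hstep : ∀ n, lyap H α (Θ n) ≤ lyap H α (Θ 0) →
      lyap H α (Θ (n + 1)) + 4 * γ * risk H α (Θ n) ≤ lyap H α (Θ n) := fun n hn => by
    have hsmall : γ * (2 * ‖Θ n‖ ^ 2 + 2) ≤ 1 := by
      nlinarith [norm_sq_le_lyap (α := α) (φ := Θ n)]
    rw [hrec]
    linarith [lyap_sub_smul_grad_le (α := α) hγ.le hsmall]
  have hbound : ∀ n, lyap H α (Θ n) ≤ lyap H α (Θ 0) := le_apply_zero_of_succ_le fun n hn => by
    have hL : 0 ≤ risk H α (Θ n) := risk_nonneg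
    nlinarith [hstep n hn]
  obtain ⟨hsummable, htsum⟩ := summable_and_tsum_le_of_descent (by positivity)
    (fun n => lyap_nonneg) (fun n => risk_nonneg) fun n => hstep n (hbound n)
  refine ⟨fun n => ?_, hsummable, htsum, hsummable.tendsto_atTop_zero⟩
  exact (Real.le_sqrt (norm_nonneg _) lyap_nonneg).2 (norm_sq_le_lyap.trans (hbound n))

theorem gd_convergence (H : ℕ) (hH : 0 < H) (α : ℝ)
    (γ : ℝ) (hγ : 0 < γ)
    (Θ : ℕ → EuclideanSpace ℝ (Fin (3*H+1)))
    (hrec : ∀ n : ℕ, Θ (n+1) = Θ n - γ • grad H α (Θ n))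
    (hγsmall : γ ≤ (4 * lyap H α (Θ 0) + 2)⁻¹) :
    (∀ n : ℕ, ‖Θ n‖ ≤ Real.sqrt (lyap H α (Θ 0))) ∧
    Summable (fun n => risk H α (Θ n)) ∧
    (∑' n : ℕ, risk H α (Θ n)) ≤ lyap H α (Θ 0) / (4 * γ) ∧
    Filter.Tendsto (fun n => risk H α (Θ n)) Filter.atTop (nhds 0) :=
  gd_convergence_general H α γ hγ Θ hrec hγsmall
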